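/- arXiv:2102.08231 — 4 statements merged into one kernel-verified Lean document; each statement's English description precedes it below -/
import Mathlib

section
/- If every job j has integral values ℓ_j, p_j, r_j, then any feasible schedule Π can be transformed into a feasible schedule Π* in which every job has an integral starting time and whose makespan satisfies ‖Π*‖ ≤ ‖Π‖. Concretely: rounding every starting time down to the nearest integer preserves feasibility and does not increase the makespan. -/
/-- Two half-open real intervals [a,b) and [c,d) overlap in positive length. -/
def IntervalsOverlap (a b c d : ℝ) : Prop := max a c < min b d

/-- Feasibility of an SMC schedule: jobs `j` have blocking time `l j`, processing time
`p j`, blocking time `r j`, are placed on machine `μ j` (a vertex of the conflict graph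
`G`) and start at time `S j`.  The schedule is feasible if no two blocking intervals of
distinct jobs on identical or adjacent machines overlap in positive length. -/
def SMCFeasible {J M : Type*} (G : SimpleGraph M) (μ : J → M)
    (l p r : J → ℕ) (S : J → ℝ) : Prop :=
  ∀ j j' : J, j ≠ j' → (μ j = μ j' ∨ G.Adj (μ j) (μ j')) →
    ¬ IntervalsOverlap (S j) (S j + l j) (S j') (S j' + l j') ∧
    ¬ IntervalsOverlap (S j) (S j + l j)
        (S j' + l j' + p j') (S j' + l j' + p j' + r j') ∧
    ¬ IntervalsOverlap (S j + l j + p j) (S j + l j + p j + r j)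
        (S j') (S j' + l j') ∧
    ¬ IntervalsOverlap (S j + l j + p j) (S j + l j + p j + r j)
        (S j' + l j' + p j') (S j' + l j' + p j' + r j')

lemma key (a c : ℝ) (m n u v : ℕ)
    (h : ¬ IntervalsOverlap (a+m) (a+m+u) (c+n) (c+n+v)) :
    ¬ IntervalsOverlap ((⌊a⌋:ℝ)+m) ((⌊a⌋:ℝ)+m+u) ((⌊c⌋:ℝ)+n) ((⌊c⌋:ℝ)+n+v) := by
  simp only [IntervalsOverlap, max_lt_iff, lt_min_iff, not_and_or, not_lt] at h
  intro hov
  simp only [IntervalsOverlap, max_lt_iff, lt_min_iff] at hov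
  obtain ⟨⟨h1, h2⟩, h3, h4⟩ := hov
  have hu : 0 < (u:ℝ) := by linarith
  have hv : 0 < (v:ℝ) := by linarith
  have h2z : (⌊a⌋ + m : ℤ) < ⌊c⌋ + n + v := by exact_mod_cast h3
  have h3z : (⌊c⌋ + n : ℤ) < ⌊a⌋ + m + u := by exact_mod_cast h2
  have h2' : (⌊a⌋ + m + 1 : ℤ) ≤ ⌊c⌋ + n + v := h2z
  have h3' : (⌊c⌋ + n + 1 : ℤ) ≤ ⌊a⌋ + m + u := h3z
  have h2r : (⌊a⌋:ℝ) + m + 1 ≤ (⌊c⌋:ℝ) + n + v := by exact_mod_cast h2'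
  have h3r : (⌊c⌋:ℝ) + n + 1 ≤ (⌊a⌋:ℝ) + m + u := by exact_mod_cast h3'
  have fa := Int.floor_le a
  have fc := Int.floor_le c
  have fa' := Int.lt_floor_add_one a
  have fc' := Int.lt_floor_add_one c
  rcases h with (h | h) | h | h <;> linarith

lemma key' (a c : ℝ) (m n u v : ℕ) {A B C D A' B' C' D' : ℝ}
    (h : ¬ IntervalsOverlap A B C D)
    (hA : A = a + m) (hB : B = a + m + u) (hC : C = c + n) (hD : D = c + n + v)
    (hA' : A' = (⌊a⌋:ℝ) + m) (hB' : B' = (⌊a⌋:ℝ) + m + u)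
    (hC' : C' = (⌊c⌋:ℝ) + n) (hD' : D' = (⌊c⌋:ℝ) + n + v) :
    ¬ IntervalsOverlap A' B' C' D' := by
  subst hA hB hC hD hA' hB' hC' hD'
  exact key a c m n u v h

/-- If all blocking and processing times ℓ_j, p_j, r_j are integral, then rounding all
starting times of a feasible schedule down to the nearest integer yields a feasible
schedule with integral starting times whose makespan does not increase. -/
theorem smc_integral_schedule {J M : Type*} [Fintype J] [Nonempty J]
    (G : SimpleGraph M) (μ : J → M) (l p r : J → ℕ) (S : J → ℝ)
    (hfeas : SMCFeasible G μ l p r S) :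
    SMCFeasible G μ l p r (fun j => (⌊S j⌋ : ℝ)) ∧
    (⨆ j : J, ((⌊S j⌋ : ℝ) + (l j + p j + r j))) ≤ ⨆ j : J, (S j + (l j + p j + r j)) := by
  constructor
  · intro j j' hne hadj
    obtain ⟨h1, h2, h3, h4⟩ := hfeas j j' hne hadj
    exact ⟨
      key' (S j) (S j') 0 0 (l j) (l j') h1
        (by push_cast; ring) (by push_cast; ring) (by push_cast; ring) (by push_cast; ring)
        (by push_cast; ring) (by push_cast; ring) (by push_cast; ring) (by push_cast; ring),
      key' (S j) (S j') 0 (l j' + p j') (l j) (r j') h2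
        (by push_cast; ring) (by push_cast; ring) (by push_cast; ring) (by push_cast; ring)
        (by push_cast; ring) (by push_cast; ring) (by push_cast; ring) (by push_cast; ring),
      key' (S j) (S j') (l j + p j) 0 (r j) (l j') h3
        (by push_cast; ring) (by push_cast; ring) (by push_cast; ring) (by push_cast; ring)
        (by push_cast; ring) (by push_cast; ring) (by push_cast; ring) (by push_cast; ring),
      key' (S j) (S j') (l j + p j) (l j' + p j') (r j) (r j') h4
        (by push_cast; ring) (by push_cast; ring) (by push_cast; ring) (by push_cast; ring)
        (by push_cast; ring) (by push_cast; ring) (by push_cast; ring) (by push_cast; ring)⟩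
  · exact ciSup_mono (Set.Finite.bddAbove (Set.finite_range _))
      (fun j => by gcongr; exact Int.floor_le _)
end

section
/- For the unit-job scheduling problem on the complete graph K_m with m ≥ 2 and n jobs, the optimal makespan equals 4·⌊n/2⌋ + 3·(n mod 2). -/
/-- Feasibility of a schedule for n identical unit jobs (blocking, processing, blocking,
each of length 1) on the complete graph K_m: jobs on the same machine must not overlap
at all, and since every two distinct machines are adjacent in K_m, the blocking units
(occupying time slots S j and S j + 2) of any two distinct jobs must be disjoint.
Starting times are integral, which is without loss of generality. -/
def KmFeasible (m n : ℕ) (μ : Fin n → Fin m) (S : Fin n → ℕ) : Prop :=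
  ∀ j j' : Fin n, j ≠ j' →
    (μ j = μ j' → S j + 3 ≤ S j' ∨ S j' + 3 ≤ S j) ∧
    (S j ≠ S j' ∧ S j + 2 ≠ S j' ∧ S j' + 2 ≠ S j)

lemma sum_range_mod_two (k : ℕ) : ∑ x ∈ Finset.range (2 * k), x % 2 = k := by
  induction k with
  | zero => simp
  | succ k ih =>
    have : 2 * (k + 1) = (2 * k + 1) + 1 := by ring
    rw [this, Finset.sum_range_succ, Finset.sum_range_succ, ih]
    omega

/-- The optimal makespan for SMC-Unit on the complete graph K_m (m ≥ 2) with n unit jobs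
is exactly 4⌊n/2⌋ + 3(n mod 2). -/
theorem smc_unit_complete_graph_makespan (m n : ℕ) (hm : 2 ≤ m) :
    IsLeast {T : ℕ | ∃ (μ : Fin n → Fin m) (S : Fin n → ℕ),
        KmFeasible m n μ S ∧ ∀ j, S j + 3 ≤ T}
      (4 * (n / 2) + 3 * (n % 2)) := by
  constructor
  · -- membership: explicit schedule
    refine ⟨fun j => if j.val % 2 = 0 then ⟨0, by omega⟩ else ⟨1, by omega⟩,
      fun j => 4 * (j.val / 2) + j.val % 2, ?_, ?_⟩
    · intro j j' hne
      have hv : j.val ≠ j'.val := fun h => hne (Fin.ext h)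
      constructor
      · intro hμ
        have hp : j.val % 2 = j'.val % 2 := by
          rcases Nat.mod_two_eq_zero_or_one j.val with h1 | h1 <;>
            rcases Nat.mod_two_eq_zero_or_one j'.val with h2 | h2 <;>
            simp [h1, h2, Fin.ext_iff] at hμ ⊢
        dsimp only
        omega
      · dsimp only
        omega
    · intro j
      have := j.is_lt
      dsimp only
      omega
  · -- lower bound
    rintro T ⟨μ, S, hF, hT⟩
    -- the 2n blocking start times are pairwise distinct
    have hinj : Function.Injective
        (fun x : Fin n × Bool => S x.1 + (if x.2 then 2 else 0)) := by
      rintro ⟨j, b⟩ ⟨j', b'⟩ h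
      simp only at h
      by_cases hjj : j = j'
      · subst hjj
        rcases b <;> rcases b' <;> simp_all
      · exfalso
        obtain ⟨-, h1, h2, h3⟩ := hF j j' hjj
        rcases b <;> rcases b' <;> simp_all
    have hsub : (Finset.univ.image
        (fun x : Fin n × Bool => S x.1 + (if x.2 then 2 else 0)))
        ⊆ Finset.range T := by
      intro t ht
      simp only [Finset.mem_image] at ht
      obtain ⟨⟨j, b⟩, -, rfl⟩ := ht
      have := hT j
      simp only [Finset.mem_range]
      rcases b <;> simp <;> omega
    have hcard : (Finset.univ.image
        (fun x : Fin n × Bool => S x.1 + (if x.2 then 2 else 0))).card = 2 * n := by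
      rw [Finset.card_image_of_injective _ hinj]
      simp [Finset.card_univ, mul_comm]
    have h2n : 2 * n ≤ T := by
      have := Finset.card_le_card hsub
      rw [hcard, Finset.card_range] at this
      exact this
    rcases Nat.even_or_odd n with he | ho
    · obtain ⟨k, hk⟩ := he; omega
    · -- odd case: show T ≠ 2n via parity
      by_contra hcon
      push_neg at hcon
      have hTeq : T = 2 * n := by omega
      subst hTeq
      have heq : (Finset.univ.image
          (fun x : Fin n × Bool => S x.1 + (if x.2 then 2 else 0)))
          = Finset.range (2 * n) := by
        apply Finset.eq_of_subset_of_card_le hsub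
        rw [hcard, Finset.card_range]
      have hsum : ∑ x ∈ Finset.range (2 * n), x % 2
          = ∑ x : Fin n × Bool, (S x.1 + (if x.2 then 2 else 0)) % 2 := by
        rw [← heq, Finset.sum_image (fun a _ b _ h => hinj h)]
      rw [sum_range_mod_two] at hsum
      rw [Fintype.sum_prod_type] at hsum
      have : ∀ j : Fin n, ∑ b : Bool, (S j + (if b then 2 else 0)) % 2
          = 2 * (S j % 2) := by
        intro j
        simp [Fintype.sum_bool]
        omega
      rw [Finset.sum_congr rfl (fun j _ => this j), ← Finset.mul_sum] at hsum
      obtain ⟨k, hk⟩ := ho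
      omega
end

section
/- Let H = (V, E′) be a star forest of a graph G and let P be an alternating path of type II or III with respect to H. Then H′ = (V, E′ Δ P) is again a star forest of G with the same set of leaves as H (where Δ denotes symmetric difference of edge sets). -/
/-- The graph determined by a "center" assignment: each non-fixed vertex `v` is joined
exactly to its center `c v`. -/
def forestGraph {V : Type*} (c : V → V) : SimpleGraph V where
  Adj v w := v ≠ w ∧ (c v = w ∨ c w = v)
  symm := by constructor; intro v w h; exact ⟨Ne.symm h.1, h.2.symm⟩
  loopless := by constructor; intro v h; exact h.1 rfl

/-- A star forest of `G`: a spanning subgraph of `G` each of whose components is a star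
`K_{1,ℓ}` with `ℓ ≥ 1`, encoded by assigning to every vertex the center of its star
(centers are fixed points; every star has at least one leaf). -/
structure StarForest {V : Type*} (G : SimpleGraph V) where
  center : V → V
  idem : ∀ v, center (center v) = center v
  sub : forestGraph center ≤ G
  spanning : ∀ v, center v = v → ∃ w, center w = v ∧ w ≠ v

/-- The leaves of a star forest. -/
def StarForest.leaves {V : Type*} {G : SimpleGraph V} (F : StarForest G) : Set V :=
  {v | F.center v ≠ v}

/-- The number of vertices of the star with center `c` (so a star `S_ℓ` has size `ℓ+1`). -/
noncomputable def StarForest.size {V : Type*} {G : SimpleGraph V} (F : StarForest G)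
    (c : V) : ℕ :=
  Set.ncard {v | F.center v = c}

/-- An alternating path visiting the distinct stars `C_1, …, C_k` of the star forest `F`:
`c i` is the center of `C_i` and, for `2 ≤ i ≤ k`, `lf i` is a leaf of `C_i`; consecutive
stars are joined by a `G`-edge from the center of `C_i` to the leaf `lf (i+1)` of
`C_{i+1}` that is not a forest edge, while the edges from each `lf i` to its center `c i`
are forest edges. -/
structure AltPath {V : Type*} {G : SimpleGraph V} (F : StarForest G) (k : ℕ) where
  c : ℕ → V
  lf : ℕ → V
  hk : 2 ≤ k
  hc : ∀ i, 1 ≤ i → i ≤ k → F.center (c i) = c i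
  hinj : ∀ i j, 1 ≤ i → i ≤ k → 1 ≤ j → j ≤ k → c i = c j → i = j
  hlf : ∀ i, 2 ≤ i → i ≤ k → F.center (lf i) = c i ∧ lf i ≠ c i
  hG : ∀ i, 1 ≤ i → i < k → G.Adj (c i) (lf (i + 1))
  hnotF : ∀ i, 1 ≤ i → i < k → ¬ (forestGraph F.center).Adj (c i) (lf (i + 1))

/-- The edge set of an alternating path: the forest edges `{lf i, c i}` (`2 ≤ i ≤ k`)
and the non-forest edges `{c i, lf (i+1)}` (`1 ≤ i ≤ k−1`). -/
def AltPath.edges {V : Type*} {G : SimpleGraph V} {F : StarForest G} {k : ℕ}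
    (P : AltPath F k) : Set (Sym2 V) :=
  {e | ∃ i, 2 ≤ i ∧ i ≤ k ∧ e = s(P.lf i, P.c i)} ∪
  {e | ∃ i, 1 ≤ i ∧ i < k ∧ e = s(P.c i, P.lf (i + 1))}

/-- Alternating path of type II: `C_1 ≅ S_1`, intermediate stars `≅ S_2`, and
`C_k ≅ S_ℓ` with `ℓ ≥ 3`. -/
def AltPath.IsTypeII {V : Type*} {G : SimpleGraph V} {F : StarForest G} {k : ℕ}
    (P : AltPath F k) : Prop :=
  F.size (P.c 1) = 2 ∧ (∀ i, 2 ≤ i → i < k → F.size (P.c i) = 3) ∧ 4 ≤ F.size (P.c k)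

/-- Alternating path of type III: `C_1 ≅ S_2`, intermediate stars `≅ S_3`, and
`C_k ≅ S_ℓ` with `ℓ ≥ 4`. -/
def AltPath.IsTypeIII {V : Type*} {G : SimpleGraph V} {F : StarForest G} {k : ℕ}
    (P : AltPath F k) : Prop :=
  F.size (P.c 1) = 3 ∧ (∀ i, 2 ≤ i → i < k → F.size (P.c i) = 4) ∧ 5 ≤ F.size (P.c k)

/-!
Switching along the path re-attaches every path leaf `lf i` (`2 ≤ i ≤ k`) from its centre
`c i` to the previous centre `c (i-1)`, and changes nothing else. The new centre map is
still idempotent, its edges are the forest edges with the matched path edges replaced by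
the unmatched ones, and its fixed points are those of the old map. The star `C_1` only
gains a leaf, each intermediate star trades one leaf for another, and `C_k` loses one leaf;
since `C_k` has at least two leaves in both types, no star becomes trivial.
-/

theorem Set.symmDiff_union_eq_diff_union {α : Type*} {E A B : Set α} (hA : A ⊆ E)
    (hB : Disjoint E B) : symmDiff E (A ∪ B) = E \ A ∪ B := by
  ext x
  have hAx := @hA x
  have hBx : x ∈ E → x ∉ B := fun h => Set.disjoint_left.mp hB h
  simp only [Set.mem_symmDiff, Set.mem_union, Set.mem_sdiff]
  tauto

theorem mem_edgeSet_forestGraph {V : Type*} (c : V → V) (e : Sym2 V) :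
    e ∈ (forestGraph c).edgeSet ↔ ∃ v, c v ≠ v ∧ e = s(v, c v) := by
  induction e using Sym2.ind with
  | _ a b =>
    rw [SimpleGraph.mem_edgeSet]
    constructor
    · rintro ⟨hne, rfl | rfl⟩
      · exact ⟨a, hne.symm, rfl⟩
      · exact ⟨b, hne, Sym2.eq_swap⟩
    · rintro ⟨v, hv, he⟩
      rcases Sym2.eq_iff.mp he with ⟨rfl, rfl⟩ | ⟨rfl, rfl⟩
      · exact ⟨hv.symm, Or.inl rfl⟩
      · exact ⟨hv, Or.inr rfl⟩

namespace AltPath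

variable {V : Type*} {G : SimpleGraph V} {F : StarForest G} {k : ℕ} (P : AltPath F k)

def pathLeaves : Set V := {v | ∃ i, 2 ≤ i ∧ i ≤ k ∧ P.lf i = v}

def matchedEdges : Set (Sym2 V) := {e | ∃ i, 2 ≤ i ∧ i ≤ k ∧ e = s(P.lf i, P.c i)}

def unmatchedEdges : Set (Sym2 V) := {e | ∃ i, 1 ≤ i ∧ i < k ∧ e = s(P.c i, P.lf (i + 1))}

theorem edges_eq_matchedEdges_union : P.edges = P.matchedEdges ∪ P.unmatchedEdges := rfl

theorem eq_of_lf_eq {i j : ℕ} (hi : 2 ≤ i) (hik : i ≤ k) (hj : 2 ≤ j) (hjk : j ≤ k)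
    (h : P.lf i = P.lf j) : i = j :=
  P.hinj i j (by omega) hik (by omega) hjk <| by
    rw [← (P.hlf i hi hik).1, ← (P.hlf j hj hjk).1, h]

theorem notMem_pathLeaves_of_center_eq {v : V} (hv : F.center v = v) : v ∉ P.pathLeaves := by
  rintro ⟨i, hi, hik, rfl⟩
  exact (P.hlf i hi hik).2 ((P.hlf i hi hik).1 ▸ hv).symm

theorem c_notMem_pathLeaves {j : ℕ} (hj : 1 ≤ j) (hjk : j ≤ k) : P.c j ∉ P.pathLeaves :=
  P.notMem_pathLeaves_of_center_eq (P.hc j hj hjk)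

theorem lf_ne_c {i j : ℕ} (hi : 2 ≤ i) (hik : i ≤ k) (hj : 1 ≤ j) (hjk : j ≤ k) :
    P.lf i ≠ P.c j := fun h =>
  P.c_notMem_pathLeaves hj hjk ⟨i, hi, hik, h⟩

theorem notMem_pathLeaves_of_center_ne_c {w : V}
    (hw : ∀ i, 2 ≤ i → i ≤ k → F.center w ≠ P.c i) : w ∉ P.pathLeaves := by
  rintro ⟨i, hi, hik, rfl⟩
  exact hw i hi hik (P.hlf i hi hik).1

open Classical in
noncomputable def newCenter (v : V) : V :=
  if h : v ∈ P.pathLeaves then P.c (h.choose - 1) else F.center v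

theorem newCenter_of_notMem {v : V} (hv : v ∉ P.pathLeaves) : P.newCenter v = F.center v :=
  dif_neg hv

theorem newCenter_lf {i : ℕ} (hi : 2 ≤ i) (hik : i ≤ k) :
    P.newCenter (P.lf i) = P.c (i - 1) := by
  have h : P.lf i ∈ P.pathLeaves := ⟨i, hi, hik, rfl⟩
  obtain ⟨hj, hjk, hji⟩ := h.choose_spec
  rw [newCenter, dif_pos h, P.eq_of_lf_eq hj hjk hi hik hji]

theorem newCenter_lf_succ {i : ℕ} (hi : 1 ≤ i) (hik : i < k) :
    P.newCenter (P.lf (i + 1)) = P.c i :=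
  P.newCenter_lf (by omega) hik

theorem newCenter_newCenter (v : V) : P.newCenter (P.newCenter v) = P.newCenter v := by
  by_cases hv : v ∈ P.pathLeaves
  · obtain ⟨i, hi, hik, rfl⟩ := hv
    rw [P.newCenter_lf hi hik,
      P.newCenter_of_notMem (P.c_notMem_pathLeaves (by omega) (by omega)),
      P.hc _ (by omega) (by omega)]
  · rw [P.newCenter_of_notMem hv,
      P.newCenter_of_notMem (P.notMem_pathLeaves_of_center_eq (F.idem v)), F.idem]

theorem newCenter_eq_self_iff (v : V) : P.newCenter v = v ↔ F.center v = v := by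
  by_cases hv : v ∈ P.pathLeaves
  · obtain ⟨i, hi, hik, rfl⟩ := hv
    rw [P.newCenter_lf hi hik, (P.hlf i hi hik).1]
    exact ⟨fun h => absurd h.symm (P.lf_ne_c hi hik (by omega) (by omega)),
      fun h => absurd h.symm (P.lf_ne_c hi hik (by omega) hik)⟩
  · rw [P.newCenter_of_notMem hv]

theorem forestGraph_newCenter_le : forestGraph P.newCenter ≤ G := by
  have hadj : ∀ v w, v ≠ w → P.newCenter v = w → G.Adj v w := by
    rintro v w hne rfl
    by_cases hv : v ∈ P.pathLeaves
    · obtain ⟨i, hi, hik, rfl⟩ := hv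
      have hG := P.hG (i - 1) (by omega) (by omega)
      rw [Nat.sub_add_cancel (by omega)] at hG
      rw [P.newCenter_lf hi hik]
      exact hG.symm
    · rw [P.newCenter_of_notMem hv] at hne ⊢
      exact F.sub ⟨hne, Or.inl rfl⟩
  rintro v w ⟨hne, h | h⟩
  · exact hadj v w hne h
  · exact (hadj w v hne.symm h).symm

theorem exists_leaf_c_last_notMem_pathLeaves (h3 : 3 ≤ F.size (P.c k)) :
    ∃ w, F.center w = P.c k ∧ w ≠ P.c k ∧ w ∉ P.pathLeaves := by
  have hlast := P.hlf k P.hk le_rfl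
  have hlt : ({P.c k, P.lf k} : Set V).ncard < F.size (P.c k) := by
    rw [Set.ncard_pair hlast.2.symm]
    omega
  obtain ⟨w, hw, hw'⟩ := Set.exists_mem_notMem_of_ncard_lt_ncard hlt
  simp only [Set.mem_insert_iff, Set.mem_singleton_iff, not_or] at hw'
  refine ⟨w, hw, hw'.1, ?_⟩
  rintro ⟨i, hi, hik, rfl⟩
  have hik' : i = k := P.hinj i k (by omega) hik (by omega) le_rfl ((P.hlf i hi hik).1 ▸ hw)
  exact hw'.2 (by rw [hik'])

/-- For `j < k` the star of `c j` gains the leaf `lf (j+1)`; the last star keeps a leaf off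
the path because it has at least two; stars off the path keep all their leaves. -/
theorem exists_newCenter_eq (h3 : 3 ≤ F.size (P.c k)) {v : V} (hv : F.center v = v) :
    ∃ w, P.newCenter w = v ∧ w ≠ v := by
  by_cases hpath : ∃ j, 1 ≤ j ∧ j ≤ k ∧ P.c j = v
  · obtain ⟨j, hj, hjk, rfl⟩ := hpath
    rcases Nat.lt_or_ge j k with hjk' | hjk'
    · exact ⟨P.lf (j + 1), P.newCenter_lf_succ hj hjk', P.lf_ne_c (by omega) hjk' hj hjk⟩
    · obtain rfl : j = k := le_antisymm hjk hjk'
      obtain ⟨w, hw, hwc, hwP⟩ := P.exists_leaf_c_last_notMem_pathLeaves h3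
      exact ⟨w, by rw [P.newCenter_of_notMem hwP, hw], hwc⟩
  · obtain ⟨w, hw, hwv⟩ := F.spanning v hv
    have hwP : w ∉ P.pathLeaves := P.notMem_pathLeaves_of_center_ne_c fun i hi hik h =>
      hpath ⟨i, by omega, hik, h ▸ hw⟩
    exact ⟨w, by rw [P.newCenter_of_notMem hwP, hw], hwv⟩

noncomputable def switch (h3 : 3 ≤ F.size (P.c k)) : StarForest G where
  center := P.newCenter
  idem := P.newCenter_newCenter
  sub := P.forestGraph_newCenter_le
  spanning v hv := P.exists_newCenter_eq h3 ((P.newCenter_eq_self_iff v).mp hv)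

theorem leaves_switch (h3 : 3 ≤ F.size (P.c k)) : (P.switch h3).leaves = F.leaves := by
  ext v
  exact not_congr (P.newCenter_eq_self_iff v)

theorem matchedEdges_subset : P.matchedEdges ⊆ (forestGraph F.center).edgeSet := by
  rintro _ ⟨i, hi, hik, rfl⟩
  exact ⟨(P.hlf i hi hik).2, Or.inl (P.hlf i hi hik).1⟩

theorem disjoint_unmatchedEdges : Disjoint (forestGraph F.center).edgeSet P.unmatchedEdges :=
  Set.disjoint_right.mpr fun _ ⟨i, hi, hik, he⟩ => he ▸ P.hnotF i hi hik

theorem forestEdge_mem_matchedEdges_iff {v : V} (hv : F.center v ≠ v) :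
    s(v, F.center v) ∈ P.matchedEdges ↔ v ∈ P.pathLeaves := by
  constructor
  · rintro ⟨i, hi, hik, he⟩
    rcases Sym2.eq_iff.mp he with ⟨rfl, -⟩ | ⟨rfl, -⟩
    · exact ⟨i, hi, hik, rfl⟩
    · exact absurd (P.hc i (by omega) hik) hv
  · rintro ⟨i, hi, hik, rfl⟩
    exact ⟨i, hi, hik, by rw [(P.hlf i hi hik).1]⟩

theorem edgeSet_forestGraph_newCenter :
    (forestGraph P.newCenter).edgeSet =
      (forestGraph F.center).edgeSet \ P.matchedEdges ∪ P.unmatchedEdges := by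
  ext e
  rw [Set.mem_union, Set.mem_sdiff, mem_edgeSet_forestGraph, mem_edgeSet_forestGraph]
  constructor
  · rintro ⟨v, hv, rfl⟩
    by_cases hvP : v ∈ P.pathLeaves
    · obtain ⟨i, hi, hik, rfl⟩ := hvP
      refine Or.inr ⟨i - 1, by omega, by omega, ?_⟩
      rw [Nat.sub_add_cancel (by omega), P.newCenter_lf hi hik, Sym2.eq_swap]
    · rw [P.newCenter_of_notMem hvP] at hv ⊢
      exact Or.inl ⟨⟨v, hv, rfl⟩, (P.forestEdge_mem_matchedEdges_iff hv).not.mpr hvP⟩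
  · rintro (⟨⟨v, hv, rfl⟩, hA⟩ | ⟨i, hi, hik, rfl⟩)
    · have hvP := (P.forestEdge_mem_matchedEdges_iff hv).not.mp hA
      exact ⟨v, by rwa [P.newCenter_of_notMem hvP], by rw [P.newCenter_of_notMem hvP]⟩
    · refine ⟨P.lf (i + 1), ?_, ?_⟩ <;> rw [P.newCenter_lf_succ hi hik]
      · exact (P.lf_ne_c (by omega) hik hi (by omega)).symm
      · exact Sym2.eq_swap

theorem edgeSet_forestGraph_newCenter_eq_symmDiff :
    (forestGraph P.newCenter).edgeSet = symmDiff (forestGraph F.center).edgeSet P.edges := by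
  rw [edges_eq_matchedEdges_union,
    Set.symmDiff_union_eq_diff_union P.matchedEdges_subset P.disjoint_unmatchedEdges,
    edgeSet_forestGraph_newCenter]

end AltPath

/-- Switching a star forest along an alternating path of type II or III (taking the
symmetric difference of the forest edges with the path edges) yields again a star forest
of `G` with the same set of leaves. -/
theorem starForest_symmDiff_altPath {V : Type*} (G : SimpleGraph V)
    (F : StarForest G) (k : ℕ) (P : AltPath F k)
    (hP : P.IsTypeII ∨ P.IsTypeIII) :
    ∃ F' : StarForest G,
      (forestGraph F'.center).edgeSet =
        symmDiff (forestGraph F.center).edgeSet P.edges ∧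
      F'.leaves = F.leaves := by
  have h3 : 3 ≤ F.size (P.c k) := by
    rcases hP with ⟨-, -, h⟩ | ⟨-, -, h⟩ <;> omega
  exact ⟨P.switch h3, P.edgeSet_forestGraph_newCenter_eq_symmDiff, P.leaves_switch h3⟩
end

section
/- Let G be a bipartite graph with maximum matching M and minimum vertex cover U (so |M| = |U| by König's theorem), with every edge of M containing exactly one vertex of U. Construct E′ by starting with M and, for each vertex v not covered by M, adding one edge {u, v} ∈ E with u ∈ U (such u always exists). Then H = (V, E′) is a star forest of G in which the centers are exactly the vertices of U that have degree ≥ 1 in H, and the independent set I = V ∖ U is exactly the set of leaves. -/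
theorem forestGraph_edgeSet {V : Type*} (c : V → V) :
    (forestGraph c).edgeSet = (fun v => s(c v, v)) '' {v | c v ≠ v} := by
  ext e
  induction e using Sym2.ind with
  | _ a b =>
    simp only [Set.mem_image, Set.mem_ofPred_eq]
    show a ≠ b ∧ (c a = b ∨ c b = a) ↔ _
    constructor
    · rintro ⟨hab, rfl | rfl⟩
      · exact ⟨a, fun h => hab h.symm, Sym2.eq_swap⟩
      · exact ⟨b, hab, rfl⟩
    · rintro ⟨v, hv, hve⟩
      rcases Sym2.eq_iff.mp hve with ⟨rfl, rfl⟩ | ⟨rfl, rfl⟩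
      · exact ⟨hv, Or.inr rfl⟩
      · exact ⟨fun h => hv h.symm, Or.inl rfl⟩

theorem exists_starForest_with_centers {V : Type*} {G : SimpleGraph V} {U : Set V}
    {E' : Set (Sym2 V)} (hE'G : E' ⊆ G.edgeSet)
    (hcross : ∀ e ∈ E', ∃ u ∈ U, ∃ v ∉ U, e = s(u, v))
    (hleaf : ∀ v ∉ U, ∃! e, e ∈ E' ∧ v ∈ e)
    (hcenter : ∀ u ∈ U, ∃ e ∈ E', u ∈ e) :
    ∃ F : StarForest G,
      (forestGraph F.center).edgeSet = E' ∧ {v | F.center v = v} = U ∧ F.leaves = Uᶜ := by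
  classical
  have hnbr : ∀ v ∉ U, ∃ u ∈ U, s(u, v) ∈ E' := by
    intro v hv
    obtain ⟨e, ⟨he, hve⟩, -⟩ := hleaf v hv
    obtain ⟨u, hu, w, -, rfl⟩ := hcross e he
    rcases Sym2.mem_iff.mp hve with rfl | rfl
    · exact absurd hu hv
    · exact ⟨u, hu, he⟩
  choose! p hpU hpE using hnbr
  have hp : ∀ u, ∀ v ∉ U, s(u, v) ∈ E' → p v = u := fun u v hv he =>
    Sym2.congr_left.mp <| (hleaf v hv).unique
      ⟨hpE v hv, Sym2.mem_mk_right _ _⟩ ⟨he, Sym2.mem_mk_right _ _⟩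
  set c := U.piecewise id p
  have hcU : ∀ v ∈ U, c v = v := fun v hv => U.piecewise_eq_of_mem _ _ hv
  have hcUc : ∀ v ∉ U, c v = p v := fun v hv => U.piecewise_eq_of_notMem _ _ hv
  have hfixed : ∀ v, c v = v ↔ v ∈ U := fun v => by
    refine ⟨fun h => ?_, hcU v⟩
    by_contra hv
    exact hv (h ▸ hcUc v hv ▸ hpU v hv)
  have hmoved : {v | c v ≠ v} = Uᶜ := by ext v; simp [hfixed]
  have hedges : (forestGraph c).edgeSet = E' := by
    rw [forestGraph_edgeSet, hmoved]
    ext e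
    constructor
    · rintro ⟨v, hv, rfl⟩
      dsimp only
      rw [hcUc v hv]
      exact hpE v hv
    · intro he
      obtain ⟨u, -, v, hv, rfl⟩ := hcross e he
      exact ⟨v, hv, show s(c v, v) = _ by rw [hcUc v hv, hp u v hv he]⟩
  refine ⟨⟨c, fun v => ?_, ?_, fun u hu => ?_⟩, hedges, by ext v; simp [hfixed], hmoved⟩
  · by_cases hv : v ∈ U
    · rw [hcU v hv, hcU v hv]
    · rw [hcUc v hv, hcU _ (hpU v hv)]
  · rw [← SimpleGraph.edgeSet_subset_edgeSet, hedges]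
    exact hE'G
  · have huU := (hfixed u).mp hu
    obtain ⟨e, he, hue⟩ := hcenter u huU
    obtain ⟨u', hu', w, hw, rfl⟩ := hcross e he
    rcases Sym2.mem_iff.mp hue with rfl | rfl
    · exact ⟨w, by rw [hcUc w hw, hp u w hw he], fun h => hw (h ▸ hu')⟩
    · exact absurd huU hw

section Matching

variable {V : Type*} {M E' : Set (Sym2 V)} {U : Set V}

theorem forall_mem_exists_mem_of_ncard_eq (hU : U.Finite)
    (hmatch : M.Pairwise fun e f => ∀ v, v ∈ e → v ∉ f)
    (hMU : ∀ e ∈ M, ∃ u ∈ U, u ∈ e) (hcard : M.ncard = U.ncard) :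
    ∀ u ∈ U, ∃ e ∈ M, u ∈ e := by
  rcases isEmpty_or_nonempty V with _ | _
  · exact fun u => isEmptyElim u
  choose! g hgU hge using hMU
  have hinj : Set.InjOn g M := fun e he f hf hef => by
    by_contra hne
    exact hmatch he hf hne (g e) (hge e he) (hef ▸ hge f hf)
  have himage : g '' M = U :=
    Set.eq_of_subset_of_ncard_le (Set.MapsTo.image_subset hgU)
      (by rw [hinj.ncard_image, hcard]) hU
  intro u hu
  rw [← himage] at hu
  obtain ⟨e, he, rfl⟩ := hu
  exact ⟨e, he, hge e he⟩

theorem exists_eq_mk_of_existsUnique_mem {e : Sym2 V} (he : ¬ e.IsDiag)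
    (hone : ∃! v, v ∈ U ∧ v ∈ e) : ∃ u ∈ U, ∃ v ∉ U, e = s(u, v) := by
  obtain ⟨u, ⟨hu, hue⟩, huniq⟩ := hone
  obtain ⟨w, rfl⟩ := Sym2.mem_iff_exists.mp hue
  refine ⟨u, hu, w, fun hw => he ?_, rfl⟩
  rw [Sym2.mk_isDiag_iff, huniq w ⟨hw, Sym2.mem_mk_right u w⟩]

theorem forall_mem_exists_eq_mk {G : SimpleGraph V} (hUM : ∀ u ∈ U, ∃ f ∈ M, u ∈ f)
    (hME : M ⊆ G.edgeSet) (hone : ∀ e ∈ M, ∃! v, v ∈ U ∧ v ∈ e)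
    (hnew : ∀ e ∈ E' \ M, ∃ u v, u ∈ U ∧ (∀ f ∈ M, v ∉ f) ∧ e = s(u, v)) :
    ∀ e ∈ E', ∃ u ∈ U, ∃ v ∉ U, e = s(u, v) := by
  intro e he
  by_cases heM : e ∈ M
  · exact exists_eq_mk_of_existsUnique_mem (G.not_isDiag_of_mem_edgeSet (hME heM)) (hone e heM)
  · obtain ⟨u, v, hu, hv, rfl⟩ := hnew e ⟨he, heM⟩
    refine ⟨u, hu, v, fun hvU => ?_, rfl⟩
    obtain ⟨f, hf, hvf⟩ := hUM v hvU
    exact hv f hf hvf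

theorem existsUnique_mem_of_notMem (hmatch : M.Pairwise fun e f => ∀ v, v ∈ e → v ∉ f)
    (hME' : M ⊆ E')
    (hnew : ∀ e ∈ E' \ M, ∃ u v, u ∈ U ∧ (∀ f ∈ M, v ∉ f) ∧ e = s(u, v))
    (hcov' : ∀ v : V, (∀ f ∈ M, v ∉ f) → ∃! e, e ∈ E' \ M ∧ v ∈ e)
    {v : V} (hv : v ∉ U) : ∃! e, e ∈ E' ∧ v ∈ e := by
  by_cases hcov : ∃ f ∈ M, v ∈ f
  · obtain ⟨f, hf, hvf⟩ := hcov
    refine ⟨f, ⟨hME' hf, hvf⟩, fun e ⟨he, hve⟩ => ?_⟩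
    have heM : e ∈ M := by
      by_contra heM
      obtain ⟨u, w, hu, hw, rfl⟩ := hnew e ⟨he, heM⟩
      rcases Sym2.mem_iff.mp hve with rfl | rfl
      · exact hv hu
      · exact hw f hf hvf
    by_contra hne
    exact hmatch heM hf hne v hve hvf
  · push Not at hcov
    obtain ⟨e, ⟨⟨he, -⟩, hve⟩, huniq⟩ := hcov' v hcov
    exact ⟨e, ⟨he, hve⟩, fun e' ⟨he', hve'⟩ =>
      huniq e' ⟨⟨he', fun hm => hcov e' hm hve'⟩, hve'⟩⟩

end Matching

theorem phase1_star_forest_general {V : Type*} [Fintype V] (G : SimpleGraph V)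
    (M : Set (Sym2 V)) (U : Set V) (E' : Set (Sym2 V))
    (hME : M ⊆ G.edgeSet)
    (hmatch : M.Pairwise fun e f => ∀ v, v ∈ e → v ∉ f)
    (hkonig : M.ncard = U.ncard)
    (hone : ∀ e ∈ M, ∃! v, v ∈ U ∧ v ∈ e)
    (hME' : M ⊆ E') (hE'G : E' ⊆ G.edgeSet)
    (hnew : ∀ e ∈ E' \ M, ∃ u v, u ∈ U ∧ (∀ f ∈ M, v ∉ f) ∧ e = s(u, v))
    (hcov' : ∀ v : V, (∀ f ∈ M, v ∉ f) → ∃! e, e ∈ E' \ M ∧ v ∈ e) :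
    ∃ F : StarForest G,
      (forestGraph F.center).edgeSet = E' ∧
      {v | F.center v = v} = {u ∈ U | ∃ e ∈ E', u ∈ e} ∧
      F.leaves = (Uᶜ : Set V) := by
  have hUM : ∀ u ∈ U, ∃ f ∈ M, u ∈ f := forall_mem_exists_mem_of_ncard_eq U.toFinite hmatch
    (fun e he => (hone e he).exists) hkonig
  have hcenter : ∀ u ∈ U, ∃ e ∈ E', u ∈ e := fun u hu =>
    let ⟨f, hf, huf⟩ := hUM u hu; ⟨f, hME' hf, huf⟩
  obtain ⟨F, hedges, hcenters, hleaves⟩ := exists_starForest_with_centers hE'G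
    (forall_mem_exists_eq_mk hUM hME hone hnew)
    (fun v hv => existsUnique_mem_of_notMem hmatch hME' hnew hcov' hv) hcenter
  refine ⟨F, hedges, ?_, hleaves⟩
  rw [hcenters, Set.sep_eq_self_iff_mem_true.mpr hcenter]

/-- Phase 1 of the decomposition algorithm: let `G` be bipartite with maximum matching
`M` and minimum vertex cover `U` (with `|M| = |U|` by Kőnig's theorem and every matching
edge containing exactly one vertex of `U`).  Extending `M` by one edge `{u,v}` with
`u ∈ U` for each vertex `v` uncovered by `M` yields an edge set `E'` such that
`H = (V, E')` is a star forest of `G` whose centers are exactly the vertices of `U`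
incident to an edge of `E'` and whose leaves are exactly the maximum independent set
`I = V ∖ U`. -/
theorem phase1_star_forest {V : Type*} [Fintype V] (G : SimpleGraph V)
    (hbip : G.Colorable 2)
    (M : Set (Sym2 V)) (U : Set V) (E' : Set (Sym2 V))
    (hME : M ⊆ G.edgeSet)
    (hmatch : M.Pairwise fun e f => ∀ v, v ∈ e → v ∉ f)
    (hMmax : ∀ M' ⊆ G.edgeSet,
      (M'.Pairwise fun e f => ∀ v, v ∈ e → v ∉ f) → M'.ncard ≤ M.ncard)
    (hUcov : ∀ e ∈ G.edgeSet, ∃ v ∈ U, v ∈ e)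
    (hUmin : ∀ U' : Set V, (∀ e ∈ G.edgeSet, ∃ v ∈ U', v ∈ e) → U.ncard ≤ U'.ncard)
    (hkonig : M.ncard = U.ncard)
    (hone : ∀ e ∈ M, ∃! v, v ∈ U ∧ v ∈ e)
    (hME' : M ⊆ E') (hE'G : E' ⊆ G.edgeSet)
    (hnew : ∀ e ∈ E' \ M, ∃ u v, u ∈ U ∧ (∀ f ∈ M, v ∉ f) ∧ e = s(u, v))
    (hcov' : ∀ v : V, (∀ f ∈ M, v ∉ f) → ∃! e, e ∈ E' \ M ∧ v ∈ e) :
    ∃ F : StarForest G,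
      (forestGraph F.center).edgeSet = E' ∧
      {v | F.center v = v} = {u ∈ U | ∃ e ∈ E', u ∈ e} ∧
      F.leaves = (Uᶜ : Set V) :=
  phase1_star_forest_general G M U E' hME hmatch hkonig hone hME' hE'G hnew hcov'
end
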